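/- arXiv:2310.16597 — 3 statements merged into one kernel-verified Lean document; each statement's English description precedes it below -/
import Mathlib

section
/- Consider a fully connected network with preactivations h_i^{(ℓ)}(x)[n] = Σ_{j=1}^{N_{ℓ-1}[n]} W_{ij}^{(ℓ)} z_j^{(ℓ-1)}(x)[n] + b_i^{(ℓ)}, z_j^{(ℓ)} = φ(h_j^{(ℓ)}), where every weight matrix W^{(ℓ)} (for ℓ ≥ 2) is row-exchangeable and column-exchangeable, W^{(1)} is row-exchangeable, all weight matrices and bias vectors across layers are mutually independent, and the biases b^{(ℓ)} have iid entries. Fix a layer ℓ ≥ 2, a finite index set L of pairs (i,x) of neuron index and input, coefficients α = (α_{(i,x)})_{(i,x)∈L}, and let ε_{ij}^{(ℓ)} = σ_W^{-1} √(N_{ℓ-1}) W_{ij}^{(ℓ)}. Then the random variables γ_j^{(ℓ)}(α, L)[n] = σ_W Σ_{(i,x)∈L} α_{(i,x)} ε_{ij}^{(ℓ)} z_j^{(ℓ-1)}(x)[n], indexed by j = 1, …, N_{ℓ-1}[n], are exchangeable: for any permutation σ of {1,…,N_{ℓ-1}[n]}, the joint distribution of (γ_{σ(j)}^{(ℓ)})_j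 equals that of (γ_j^{(ℓ)})_j. -/
open MeasureTheory ProbabilityTheory Finset

noncomputable section

variable {Ω : Type*} [MeasureSpace Ω]

/-- A random matrix field `W : ℕ → ℕ → Ω → ℝ` with `m` relevant rows is row-exchangeable
if its joint distribution is invariant under any permutation of its (first `m`) rows. -/
def RowExchangeable (W : ℕ → ℕ → Ω → ℝ) (m : ℕ) : Prop :=
  ∀ σ : Equiv.Perm ℕ, (∀ i, m ≤ i → σ i = i) →
    IdentDistrib (fun ω => fun i j : ℕ => W (σ i) j ω)
      (fun ω => fun i j : ℕ => W i j ω) volume volume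

/-- Column-exchangeability of a random matrix field with `nc` relevant columns. -/
def ColExchangeable (W : ℕ → ℕ → Ω → ℝ) (nc : ℕ) : Prop :=
  ∀ σ : Equiv.Perm ℕ, (∀ j, nc ≤ j → σ j = j) →
    IdentDistrib (fun ω => fun i j : ℕ => W i (σ j) ω)
      (fun ω => fun i j : ℕ => W i j ω) volume volume

/-- The index type for the joint family of per-layer weight matrices (`Sum.inl ℓ`) and
per-layer bias vectors (`Sum.inr ℓ`). -/
def netFieldType : ℕ ⊕ ℕ → Type :=
  Sum.elim (fun _ => ℕ → ℕ → ℝ) (fun _ => ℕ → ℝ)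

instance netFieldTypeMeasurableSpace : ∀ k, MeasurableSpace (netFieldType k)
  | Sum.inl _ => inferInstanceAs (MeasurableSpace (ℕ → ℕ → ℝ))
  | Sum.inr _ => inferInstanceAs (MeasurableSpace (ℕ → ℝ))

/-- The joint family of per-layer weight matrices and per-layer bias vectors. -/
def netFields (W : ℕ → ℕ → ℕ → Ω → ℝ) (b : ℕ → ℕ → Ω → ℝ) :
    (k : ℕ ⊕ ℕ) → Ω → netFieldType k
  | Sum.inl ℓ => fun ω i j => W ℓ i j ω
  | Sum.inr ℓ => fun ω i => b ℓ i ω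

/-! Relabelling the neurons of layer `ℓ - 1` by `σ` (permuting the rows of `W^{(ℓ-1)}`, the
entries of `b^{(ℓ-1)}` and the columns of `W^{(ℓ)}` simultaneously) turns the summand `γ_j` into
`γ_{σ j}`, since it leaves the layers below untouched and permutes the outputs of layer `ℓ - 1`.
Each of the three relabelled blocks has the law of the original one (column exchangeability,
row exchangeability, iid biases), and all blocks are independent, so the relabelled parameter
family has the same law as the original one. -/

namespace ProbabilityTheory

theorem iIndepFun.identDistrib_pi {ι α : Type*} {𝓧 : ι → Type*} [∀ i, MeasurableSpace (𝓧 i)]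
    [MeasurableSpace α] {μ ν : Measure α} {X Y : (i : ι) → α → 𝓧 i}
    (hX : iIndepFun X μ) (hY : iIndepFun Y ν)
    (mX : ∀ i, Measurable (X i)) (mY : ∀ i, Measurable (Y i))
    (hXY : ∀ i, IdentDistrib (X i) (Y i) μ ν) :
    IdentDistrib (fun a i ↦ X i a) (fun a i ↦ Y i a) μ ν where
  aemeasurable_fst := (measurable_pi_lambda _ mX).aemeasurable
  aemeasurable_snd := (measurable_pi_lambda _ mY).aemeasurable
  map_eq := by
    have := hX.isProbabilityMeasure
    have := hY.isProbabilityMeasure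
    rw [hX.map_fun_eq_infinitePi_map mX, hY.map_fun_eq_infinitePi_map mY]
    simp_rw [(hXY _).map_eq]

theorem iIndepFun.identDistrib_comp_perm {ι α β : Type*} [MeasurableSpace α]
    [MeasurableSpace β] {μ : Measure α} {X : ι → α → β}
    (hX : iIndepFun X μ) (mX : ∀ i, Measurable (X i))
    (hid : ∀ i j, IdentDistrib (X i) (X j) μ μ) (σ : Equiv.Perm ι) :
    IdentDistrib (fun a i ↦ X (σ i) a) (fun a i ↦ X i a) μ μ :=
  (hX.precomp σ.injective).identDistrib_pi hX (fun _ ↦ mX _) mX fun _ ↦ hid _ _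

end ProbabilityTheory

@[simp]
theorem netFields_inl_apply {α : Type*} (W : ℕ → ℕ → ℕ → α → ℝ) (b : ℕ → ℕ → α → ℝ)
    (l : ℕ) (a : α) (i j : ℕ) : netFields W b (.inl l) a i j = W l i j a := rfl

section Network

variable {𝒳 : Type*} (emb : 𝒳 → ℕ → ℝ) (φ : ℝ → ℝ) (Nn : ℕ → ℕ)

/-- The preactivations `h^{(k)}_i(x)` as a function of the parameters `v`. -/
def preact (v : (k : ℕ ⊕ ℕ) → netFieldType k) : ℕ → ℕ → 𝒳 → ℝ
  | 0, _, _ => 0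
  | 1, i, x => (∑ j ∈ range (Nn 0), v (.inl 1) i j * emb x j) + v (.inr 1) i
  | k + 2, i, x =>
      (∑ j ∈ range (Nn (k + 1)), v (.inl (k + 2)) i j * φ (preact v (k + 1) j x)) +
        v (.inr (k + 2)) i

variable {φ} in
theorem measurable_preact (hφ : Measurable φ) :
    ∀ k i (x : 𝒳), Measurable fun v : (k : ℕ ⊕ ℕ) → netFieldType k ↦ preact emb φ Nn v k i x
  | 0, _, _ => measurable_const
  | 1, _, _ => by simp only [preact]; fun_prop
  | k + 2, _, x => by
    have := fun j ↦ measurable_preact hφ (k + 1) j x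
    simp only [preact]
    fun_prop

variable {emb φ Nn} in
theorem preact_congr {v v' : (k : ℕ ⊕ ℕ) → netFieldType k} :
    ∀ {k : ℕ}, (∀ l ≤ k, v (.inl l) = v' (.inl l) ∧ v (.inr l) = v' (.inr l)) →
      preact emb φ Nn v k = preact emb φ Nn v' k
  | 0, _ => rfl
  | 1, h => by
    obtain ⟨hW, hb⟩ := h 1 le_rfl
    simp only [preact, hW, hb]
  | k + 2, h => by
    obtain ⟨hW, hb⟩ := h (k + 2) le_rfl
    have ih := preact_congr (k := k + 1) fun l hl ↦ h l (by omega)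
    simp only [preact, hW, hb, ih]

/-- Relabels the neurons of layer `ℓ` by `σ`: the rows of `W^{(ℓ)}`, the entries of `b^{(ℓ)}`
and the columns of `W^{(ℓ+1)}` are permuted together. -/
def relabelNeurons (ℓ : ℕ) (σ : Equiv.Perm ℕ) : (k : ℕ ⊕ ℕ) → netFieldType k → netFieldType k
  | .inl k => fun (w : ℕ → ℕ → ℝ) i j ↦
      w (if k = ℓ then σ i else i) (if k = ℓ + 1 then σ j else j)
  | .inr k => fun (w : ℕ → ℝ) i ↦ w (if k = ℓ then σ i else i)

@[simp]
theorem relabelNeurons_inl_apply (ℓ : ℕ) (σ : Equiv.Perm ℕ) (k : ℕ) (w : netFieldType (.inl k))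
    (i j : ℕ) :
    relabelNeurons ℓ σ (.inl k) w i j =
      w (if k = ℓ then σ i else i) (if k = ℓ + 1 then σ j else j) := rfl

@[simp]
theorem relabelNeurons_inr_apply (ℓ : ℕ) (σ : Equiv.Perm ℕ) (k : ℕ) (w : netFieldType (.inr k))
    (i : ℕ) : relabelNeurons ℓ σ (.inr k) w i = w (if k = ℓ then σ i else i) := rfl

theorem measurable_relabelNeurons (ℓ : ℕ) (σ : Equiv.Perm ℕ) :
    ∀ k, Measurable (relabelNeurons ℓ σ k)
  | .inl _ => by unfold relabelNeurons; fun_prop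
  | .inr _ => by unfold relabelNeurons; fun_prop

theorem preact_relabelNeurons (v : (k : ℕ ⊕ ℕ) → netFieldType k) (σ : Equiv.Perm ℕ)
    (m j : ℕ) (x : 𝒳) :
    preact emb φ Nn (fun k ↦ relabelNeurons (m + 1) σ k (v k)) (m + 1) j x =
      preact emb φ Nn v (m + 1) (σ j) x := by
  rcases m with _ | m
  · simp [preact]
  · have below : preact emb φ Nn (fun k ↦ relabelNeurons (m + 2) σ k (v k)) (m + 1) =
        preact emb φ Nn v (m + 1) :=
      preact_congr fun l hl ↦ by
        have : l ≠ m + 2 ∧ l ≠ m + 3 := by omega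
        exact ⟨funext₂ fun i j ↦ by simp [this], funext fun i ↦ by simp [this]⟩
    simp only [preact, below]
    simp

theorem preact_netFields {α : Type*} {W : ℕ → ℕ → ℕ → α → ℝ} {b : ℕ → ℕ → α → ℝ}
    {h : ℕ → ℕ → 𝒳 → α → ℝ}
    (hrec1 : ∀ i x a, h 1 i x a = (∑ j ∈ range (Nn 0), W 1 i j a * emb x j) + b 1 i a)
    (hrec : ∀ l, 1 ≤ l → ∀ i x a,
      h (l + 1) i x a = (∑ j ∈ range (Nn l), W (l + 1) i j a * φ (h l j x a)) + b (l + 1) i a)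
    (a : α) : ∀ k, 1 ≤ k → ∀ i x, preact emb φ Nn (fun k ↦ netFields W b k a) k i x = h k i x a
  | 1, _, i, x => by simp [preact, netFields, hrec1]
  | k + 2, _, i, x => by
    rw [hrec (k + 1) (by omega)]
    simp only [preact, preact_netFields hrec1 hrec a (k + 1) (by omega)]
    rfl

theorem identDistrib_relabelNeurons {W : ℕ → ℕ → ℕ → Ω → ℝ} {b : ℕ → ℕ → Ω → ℝ}
    (hW : ∀ l i j, Measurable (W l i j)) (hb : ∀ l i, Measurable (b l i))
    (hindep : iIndepFun (netFields W b) volume) {m width : ℕ}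
    (hrow : RowExchangeable (W m) width) (hcol : ColExchangeable (W (m + 1)) width)
    (hbiid : iIndepFun (b m) volume) (hbid : ∀ i i', IdentDistrib (b m i) (b m i') volume volume)
    {σ : Equiv.Perm ℕ} (hσ : ∀ j, width ≤ j → σ j = j) :
    IdentDistrib (fun ω k ↦ relabelNeurons m σ k (netFields W b k ω))
      (fun ω k ↦ netFields W b k ω) volume volume := by
  have mF : ∀ k, Measurable (netFields W b k)
    | .inl l => measurable_pi_lambda _ fun i ↦ measurable_pi_lambda _ fun j ↦ hW l i j
    | .inr l => measurable_pi_lambda _ fun i ↦ hb l i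
  refine (hindep.comp _ (measurable_relabelNeurons m σ)).identDistrib_pi hindep
    (fun k ↦ (measurable_relabelNeurons m σ k).comp (mF k)) mF ?_
  rintro (l | l)
  · change IdentDistrib
      (fun ω i j ↦ W l (if l = m then σ i else i) (if l = m + 1 then σ j else j) ω)
      (fun ω i j ↦ W l i j ω) volume volume
    by_cases h₁ : l = m + 1
    · subst h₁
      simpa using hcol σ hσ
    by_cases h₂ : l = m
    · subst h₂
      simpa using hrow σ hσ
    simp only [h₁, h₂, if_false]
    exact IdentDistrib.refl (mF (.inl l)).aemeasurable
  · change IdentDistrib (fun ω i ↦ b l (if l = m then σ i else i) ω) (fun ω i ↦ b l i ω)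
      volume volume
    by_cases h : l = m
    · subst h
      simpa using hbiid.identDistrib_comp_perm (hb l) hbid σ
    simp only [h, if_false]
    exact IdentDistrib.refl (mF (.inr l)).aemeasurable

theorem identDistrib_outWeights_preact_perm {W : ℕ → ℕ → ℕ → Ω → ℝ} {b : ℕ → ℕ → Ω → ℝ}
    (hφ : Measurable φ) (hW : ∀ l i j, Measurable (W l i j)) (hb : ∀ l i, Measurable (b l i))
    (hindep : iIndepFun (netFields W b) volume) {m : ℕ}
    (hrow : RowExchangeable (W (m + 1)) (Nn (m + 1)))
    (hcol : ColExchangeable (W (m + 2)) (Nn (m + 1)))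
    (hbiid : iIndepFun (b (m + 1)) volume)
    (hbid : ∀ i i', IdentDistrib (b (m + 1) i) (b (m + 1) i') volume volume)
    {h : ℕ → ℕ → 𝒳 → Ω → ℝ}
    (hrec1 : ∀ i x ω, h 1 i x ω = (∑ j ∈ range (Nn 0), W 1 i j ω * emb x j) + b 1 i ω)
    (hrec : ∀ l, 1 ≤ l → ∀ i x ω,
      h (l + 1) i x ω = (∑ j ∈ range (Nn l), W (l + 1) i j ω * φ (h l j x ω)) + b (l + 1) i ω)
    {σ : Equiv.Perm ℕ} (hσ : ∀ j, Nn (m + 1) ≤ j → σ j = j) :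
    IdentDistrib (fun ω j ↦ ((fun i ↦ W (m + 2) i (σ j) ω), fun x ↦ h (m + 1) (σ j) x ω))
      (fun ω j ↦ ((fun i ↦ W (m + 2) i j ω), fun x ↦ h (m + 1) j x ω)) volume volume := by
  let features (v : (k : ℕ ⊕ ℕ) → netFieldType k) (j : ℕ) : (ℕ → ℝ) × (𝒳 → ℝ) :=
    (fun i ↦ v (.inl (m + 2)) i j, fun x ↦ preact emb φ Nn v (m + 1) j x)
  have hfeatures : Measurable features := by
    refine measurable_pi_lambda _ fun j ↦ .prod ?_ ?_
    · exact measurable_pi_lambda _ fun i ↦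
        (measurable_pi_apply j).comp ((measurable_pi_apply i).comp (measurable_pi_apply _))
    · exact measurable_pi_lambda _ fun x ↦ measurable_preact emb Nn hφ (m + 1) j x
  have hlaw := (identDistrib_relabelNeurons hW hb hindep hrow hcol hbiid hbid hσ).comp hfeatures
  have hpreact := preact_netFields emb φ Nn hrec1 hrec
  convert hlaw using 1 <;> funext ω j
  · simp [features, preact_relabelNeurons, hpreact ω (m + 1) (by omega)]
  · simp [features, hpreact ω (m + 1) (by omega)]

end Network

theorem gamma_summands_exchangeable_general
    {𝒳 : Type*} (emb : 𝒳 → ℕ → ℝ) (φ : ℝ → ℝ) (hφ : Measurable φ)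
    (σW : ℝ) (N : ℕ → ℕ → ℕ)
    (W : ℕ → ℕ → ℕ → ℕ → Ω → ℝ) (b : ℕ → ℕ → Ω → ℝ)
    (hWmeas : ∀ n ℓ i j, Measurable (W n ℓ i j))
    (hbmeas : ∀ ℓ i, Measurable (b ℓ i))
    -- every weight matrix at layer ℓ ≥ 2 is row- and column-exchangeable
    (hexch : ∀ n ℓ', 2 ≤ ℓ' →
      RowExchangeable (W n ℓ') (N ℓ' n) ∧ ColExchangeable (W n ℓ') (N (ℓ' - 1) n))
    -- the first-layer weight matrix is row-exchangeable
    (hexch1 : ∀ n, RowExchangeable (W n 1) (N 1 n))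
    -- all weight matrices and bias vectors across layers are mutually independent
    (hindep : ∀ n, iIndepFun (netFields (W n) b) volume)
    -- the biases have iid entries
    (hbiid : ∀ ℓ, iIndepFun (fun i => b ℓ i) volume)
    (hbid : ∀ ℓ i i', IdentDistrib (b ℓ i) (b ℓ i') volume volume)
    -- the preactivations h satisfy the fully connected recursion
    (h : ℕ → ℕ → ℕ → 𝒳 → Ω → ℝ)
    (hrec1 : ∀ n i x ω,
      h n 1 i x ω = (∑ j ∈ Finset.range (N 0 n), W n 1 i j ω * emb x j) + b 1 i ω)
    (hrec : ∀ n ℓ', 1 ≤ ℓ' → ∀ i x ω,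
      h n (ℓ' + 1) i x ω =
        (∑ j ∈ Finset.range (N ℓ' n), W n (ℓ' + 1) i j ω * φ (h n ℓ' j x ω)) + b (ℓ' + 1) i ω)
    -- a fixed layer ℓ ≥ 2, finite index set L = {(idx p, inp p)} and coefficients α
    (ℓ : ℕ) (hℓ : 2 ≤ ℓ)
    (P : ℕ) (idx : Fin P → ℕ) (inp : Fin P → 𝒳) (α : Fin P → ℝ) :
    -- the summands γ_j are exchangeable over j ∈ {1, …, N_{ℓ-1}[n]}
    ∀ n, ∀ σ : Equiv.Perm ℕ, (∀ j, N (ℓ - 1) n ≤ j → σ j = j) →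
      IdentDistrib
        (fun ω => fun j : ℕ =>
          σW * ∑ p, α p * (σW⁻¹ * Real.sqrt (N (ℓ - 1) n) * W n ℓ (idx p) (σ j) ω) *
            φ (h n (ℓ - 1) (σ j) (inp p) ω))
        (fun ω => fun j : ℕ =>
          σW * ∑ p, α p * (σW⁻¹ * Real.sqrt (N (ℓ - 1) n) * W n ℓ (idx p) j ω) *
            φ (h n (ℓ - 1) j (inp p) ω))
        volume volume := by
  intro n σ hσ
  obtain ⟨m, rfl⟩ : ∃ m, ℓ = m + 2 := ⟨ℓ - 2, by omega⟩
  have hrow : RowExchangeable (W n (m + 1)) (N (m + 1) n) := by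
    rcases m with _ | m
    exacts [hexch1 n, (hexch n (m + 2) le_add_self).1]
  have hfeatures := identDistrib_outWeights_preact_perm emb φ (N · n) hφ (hWmeas n) hbmeas
    (hindep n) hrow (hexch n (m + 2) le_add_self).2 (hbiid (m + 1)) (hbid (m + 1))
    (hrec1 n) (hrec n) hσ
  refine hfeatures.comp (u := fun u j ↦ σW * ∑ p, α p *
    (σW⁻¹ * Real.sqrt (N (m + 1) n) * (u j).1 (idx p)) * φ ((u j).2 (inp p))) ?_
  fun_prop

/-- Exchangeability of the summands `γ_j^{(ℓ)}(α, L)[n]` appearing in the exchangeable-CLT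
argument for fully connected networks with row- and column-exchangeable weights,
mutually independent layers and iid bias entries. -/
theorem gamma_summands_exchangeable
    [IsProbabilityMeasure (volume : Measure Ω)]
    {𝒳 : Type*} (emb : 𝒳 → ℕ → ℝ) (φ : ℝ → ℝ) (hφ : Measurable φ)
    (σW : ℝ) (N : ℕ → ℕ → ℕ)
    (W : ℕ → ℕ → ℕ → ℕ → Ω → ℝ) (b : ℕ → ℕ → Ω → ℝ)
    (hWmeas : ∀ n ℓ i j, Measurable (W n ℓ i j))
    (hbmeas : ∀ ℓ i, Measurable (b ℓ i))
    -- every weight matrix at layer ℓ ≥ 2 is row- and column-exchangeable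
    (hexch : ∀ n ℓ', 2 ≤ ℓ' →
      RowExchangeable (W n ℓ') (N ℓ' n) ∧ ColExchangeable (W n ℓ') (N (ℓ' - 1) n))
    -- the first-layer weight matrix is row-exchangeable
    (hexch1 : ∀ n, RowExchangeable (W n 1) (N 1 n))
    -- all weight matrices and bias vectors across layers are mutually independent
    (hindep : ∀ n, iIndepFun (netFields (W n) b) volume)
    -- the biases have iid entries
    (hbiid : ∀ ℓ, iIndepFun (fun i => b ℓ i) volume)
    (hbid : ∀ ℓ i i', IdentDistrib (b ℓ i) (b ℓ i') volume volume)
    -- the preactivations h satisfy the fully connected recursion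
    (h : ℕ → ℕ → ℕ → 𝒳 → Ω → ℝ)
    (hrec1 : ∀ n i x ω,
      h n 1 i x ω = (∑ j ∈ Finset.range (N 0 n), W n 1 i j ω * emb x j) + b 1 i ω)
    (hrec : ∀ n ℓ', 1 ≤ ℓ' → ∀ i x ω,
      h n (ℓ' + 1) i x ω =
        (∑ j ∈ Finset.range (N ℓ' n), W n (ℓ' + 1) i j ω * φ (h n ℓ' j x ω)) + b (ℓ' + 1) i ω)
    -- a fixed layer ℓ ≥ 2, finite index set L = {(idx p, inp p)} and coefficients α
    (ℓ : ℕ) (hℓ : 2 ≤ ℓ)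
    (P : ℕ) (idx : Fin P → ℕ) (inp : Fin P → 𝒳) (α : Fin P → ℝ) :
    -- the summands γ_j are exchangeable over j ∈ {1, …, N_{ℓ-1}[n]}
    ∀ n, ∀ σ : Equiv.Perm ℕ, (∀ j, N (ℓ - 1) n ≤ j → σ j = j) →
      IdentDistrib
        (fun ω => fun j : ℕ =>
          σW * ∑ p, α p * (σW⁻¹ * Real.sqrt (N (ℓ - 1) n) * W n ℓ (idx p) (σ j) ω) *
            φ (h n (ℓ - 1) (σ j) (inp p) ω))
        (fun ω => fun j : ℕ =>
          σW * ∑ p, α p * (σW⁻¹ * Real.sqrt (N (ℓ - 1) n) * W n ℓ (idx p) j ω) *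
            φ (h n (ℓ - 1) j (inp p) ω))
        volume volume :=
  gamma_summands_exchangeable_general emb φ hφ σW N W b hWmeas hbmeas hexch hexch1 hindep hbiid hbid
    h hrec1 hrec ℓ hℓ P idx inp α
end
end

section
/- Let A = A[n] ∈ ℝ^{n×n} be Haar-distributed on the orthogonal group O(n). Then for any fixed row indices i_a, i_b, i_c, i_d and any two distinct column indices j ≠ j', the rescaled fourth-order cross-moment satisfies lim_{n→∞} n² E[A_{i_a,j} A_{i_b,j} A_{i_c,j'} A_{i_d,j'}] = δ_{i_a,i_b} δ_{i_c,i_d}; that is, Haar orthogonal matrices satisfy condition (iv) of the Pseudo-iid definition with σ² = 1. -/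
/-
Left invariance makes the moment tensor `m(i₁, i₂, i₃, i₄) = E[X_{i₁j} X_{i₂j} X_{i₃j'} X_{i₄j'}]`
invariant under sign changes and permutations of the row indices. Hence it vanishes unless the
row indices pair up, and it is determined by `S = m(p,p,p,p)`, `D = m(p,p,q,q)`, `C = m(p,q,p,q)`.
Orthonormality of the columns `j ≠ j'` gives `n S + n(n-1) D = 1` and `S + (n-1) C = 0`, and
invariance under the rotation by `π/4` in the `(p, q)`-plane gives `2 C = S - D`. Solving,
`D = (n+1)/((n-1)n(n+2))` and `C = -1/((n-1)n(n+2))`, so `n² D → 1` and `n² C → 0`.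
-/

open MeasureTheory ProbabilityTheory Filter Finset Topology

noncomputable section

/-- Matrices over a measurable space carry the product measurable structure. -/
instance matrixMeasurableSpace {m n α : Type*} [MeasurableSpace α] :
    MeasurableSpace (Matrix m n α) :=
  inferInstanceAs (MeasurableSpace (m → n → α))

open Matrix

theorem Equiv.Perm.exists_apply_eq_and_apply_eq {α : Type*} [DecidableEq α] {p q a b : α}
    (hpq : p ≠ q) (hab : a ≠ b) : ∃ σ : Equiv.Perm α, σ p = a ∧ σ q = b := by
  refine ⟨Equiv.swap p a * Equiv.swap q (Equiv.swap p a b), ?_, by simp⟩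
  have hb : Equiv.swap p a b ≠ p := by
    rw [Ne, Equiv.swap_apply_eq_iff, Equiv.swap_apply_left]
    exact hab.symm
  simp [Equiv.swap_apply_of_ne_of_ne hpq hb.symm]

theorem Fintype.sum_ite_eq_const {ι M : Type*} [Fintype ι] [DecidableEq ι] [AddCommGroup M]
    (k : ι) (a b : M) : ∑ i, (if k = i then a else b) = a - b + Fintype.card ι • b := by
  calc ∑ i, (if k = i then a else b) = ∑ i, ((if k = i then a - b else 0) + b) :=
        Finset.sum_congr rfl fun i _ => by split_ifs <;> simp
    _ = a - b + Fintype.card ι • b := by simp [Finset.sum_add_distrib]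

theorem Matrix.measurable_apply {m n α : Type*} [MeasurableSpace α] (i : m) (k : n) :
    Measurable fun M : Matrix m n α => M i k :=
  (measurable_pi_apply k).comp (measurable_pi_apply i)

section OrthogonalMatrices

variable {ι R : Type*} [Fintype ι] [DecidableEq ι] [CommRing R]

theorem Equiv.Perm.permMatrix_mem_orthogonalGroup (σ : Equiv.Perm ι) :
    σ.permMatrix R ∈ orthogonalGroup ι R := by
  rw [mem_orthogonalGroup_iff', transpose_permMatrix, ← permMatrix_mul, mul_inv_cancel,
    permMatrix_one]

theorem Matrix.diagonal_mem_orthogonalGroup {d : ι → R} (hd : ∀ i, d i * d i = 1) :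
    diagonal d ∈ orthogonalGroup ι R := by
  rw [mem_orthogonalGroup_iff', diagonal_transpose, diagonal_mul_diagonal]
  simpa [funext_iff] using hd

def Matrix.planeRotation (p q : ι) (c s : R) : Matrix ι ι R :=
  Matrix.of fun i k =>
    if i = p then c * (1 : Matrix ι ι R) p k - s * (1 : Matrix ι ι R) q k
    else if i = q then s * (1 : Matrix ι ι R) p k + c * (1 : Matrix ι ι R) q k
    else (1 : Matrix ι ι R) i k

theorem Matrix.planeRotation_mul_apply (p q : ι) (c s : R) (M : Matrix ι ι R) (i k : ι) :
    (planeRotation p q c s * M) i k =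
      if i = p then c * M p k - s * M q k
      else if i = q then s * M p k + c * M q k
      else M i k := by
  simp only [planeRotation, mul_apply, of_apply]
  split_ifs <;> simp [sub_mul, add_mul, Finset.sum_sub_distrib, Finset.sum_add_distrib, one_apply]

theorem Matrix.planeRotation_mem_orthogonalGroup {p q : ι} (hpq : p ≠ q) {c s : R}
    (hcs : c ^ 2 + s ^ 2 = 1) : planeRotation p q c s ∈ orthogonalGroup ι R := by
  rw [mem_orthogonalGroup_iff]
  ext i k
  rw [planeRotation_mul_apply]
  simp only [planeRotation, one_apply]
  split_ifs <;> simp_all <;> grind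

theorem Matrix.sum_apply_mul_apply_of_mem_orthogonalGroup {M : Matrix ι ι R}
    (hM : M ∈ orthogonalGroup ι R) (u v : ι) :
    ∑ l, M l u * M l v = (1 : Matrix ι ι R) u v := by
  rw [← (mem_orthogonalGroup_iff' ι R).mp hM, mul_apply]
  rfl

end OrthogonalMatrices

/- The orthogonal Weingarten function of degree two in dimension `n`: `Wg(π, σ)` for pairings
`π = σ` and `π ≠ σ` of `{1, 2, 3, 4}`. -/
def orthWeingartenEq (n : ℝ) : ℝ := (n + 1) / ((n - 1) * n * (n + 2))

def orthWeingartenNe (n : ℝ) : ℝ := -1 / ((n - 1) * n * (n + 2))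

section CrossMoment

variable {Ω ι : Type*} [MeasureSpace Ω] {X : Ω → Matrix ι ι ℝ}

def crossMoment (X : Ω → Matrix ι ι ℝ) (j j' i₁ i₂ i₃ i₄ : ι) : ℝ :=
  ∫ ω, X ω i₁ j * X ω i₂ j * X ω i₃ j' * X ω i₄ j'

theorem crossMoment_swap₃₄ (X : Ω → Matrix ι ι ℝ) (j j' i₁ i₂ i₃ i₄ : ι) :
    crossMoment X j j' i₁ i₂ i₃ i₄ = crossMoment X j j' i₁ i₂ i₄ i₃ := by
  simp only [crossMoment, mul_right_comm _ (X _ i₃ j')]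

variable [Fintype ι] [DecidableEq ι]

theorem integrable_entry_mul_entry_mul_entry_mul_entry [IsFiniteMeasure (volume : Measure Ω)]
    (hX : AEMeasurable X) (horth : ∀ᵐ ω, X ω ∈ orthogonalGroup ι ℝ) (i₁ k₁ i₂ k₂ i₃ k₃ i₄ k₄ : ι) :
    Integrable fun ω => X ω i₁ k₁ * X ω i₂ k₂ * X ω i₃ k₃ * X ω i₄ k₄ := by
  have hentry (i k : ι) : AEMeasurable fun ω => X ω i k :=
    (measurable_apply i k).comp_aemeasurable hX
  refine .of_bound (C := 1) (((((hentry i₁ k₁).mul (hentry i₂ k₂)).mul (hentry i₃ k₃)).mul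
    (hentry i₄ k₄)).aestronglyMeasurable) ?_
  filter_upwards [horth] with ω hω
  have h (i k : ι) : ‖X ω i k‖ ≤ 1 := entry_norm_bound_of_unitary hω i k
  simp only [norm_mul]
  exact mul_le_one₀ (mul_le_one₀ (mul_le_one₀ (h _ _) (norm_nonneg _) (h _ _)) (norm_nonneg _)
    (h _ _)) (norm_nonneg _) (h _ _)

theorem sum_sum_crossMoment [IsProbabilityMeasure (volume : Measure Ω)] (hX : AEMeasurable X)
    (horth : ∀ᵐ ω, X ω ∈ orthogonalGroup ι ℝ) (j j' : ι) :
    ∑ k, ∑ i, crossMoment X j j' k k i i = 1 := by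
  have hint := integrable_entry_mul_entry_mul_entry_mul_entry hX horth
  calc ∑ k, ∑ i, crossMoment X j j' k k i i
      = ∫ ω, ∑ k, ∑ i, X ω k j * X ω k j * X ω i j' * X ω i j' := by
        rw [integral_finsetSum _ fun k _ => integrable_finsetSum _ fun i _ => hint ..]
        simp_rw [integral_finsetSum _ fun i _ => hint ..]
        rfl
    _ = ∫ _, 1 := integral_congr_ae <| by
        filter_upwards [horth] with ω hω
        calc ∑ k, ∑ i, X ω k j * X ω k j * X ω i j' * X ω i j'
            = (∑ k, X ω k j * X ω k j) * ∑ i, X ω i j' * X ω i j' := by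
              simp only [Finset.sum_mul_sum, mul_assoc]
          _ = 1 := by simp [sum_apply_mul_apply_of_mem_orthogonalGroup hω]
    _ = 1 := by simp

theorem sum_crossMoment_eq_zero [IsFiniteMeasure (volume : Measure Ω)] (hX : AEMeasurable X)
    (horth : ∀ᵐ ω, X ω ∈ orthogonalGroup ι ℝ) {j j' : ι} (hjj : j ≠ j') (k : ι) :
    ∑ i, crossMoment X j j' k i k i = 0 := by
  have hint := integrable_entry_mul_entry_mul_entry_mul_entry hX horth
  calc ∑ i, crossMoment X j j' k i k i
      = ∫ ω, ∑ i, X ω k j * X ω i j * X ω k j' * X ω i j' := by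
        rw [integral_finsetSum _ fun i _ => hint ..]
        rfl
    _ = ∫ _, 0 := integral_congr_ae <| by
        filter_upwards [horth] with ω hω
        calc ∑ i, X ω k j * X ω i j * X ω k j' * X ω i j'
            = (∑ i, X ω i j * X ω i j') * (X ω k j * X ω k j') := by
              rw [Finset.sum_mul]
              exact Finset.sum_congr rfl fun i _ => by ring
          _ = 0 := by simp [sum_apply_mul_apply_of_mem_orthogonalGroup hω, one_apply_ne hjj]
    _ = 0 := by simp

variable (hinv : ∀ Q ∈ orthogonalGroup ι ℝ, IdentDistrib (fun ω => Q * X ω) X volume volume)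
include hinv

theorem aemeasurable_of_identDistrib_mul_left : AEMeasurable X :=
  (hinv 1 (one_mem _)).aemeasurable_snd

theorem crossMoment_mul_left {Q : Matrix ι ι ℝ} (hQ : Q ∈ orthogonalGroup ι ℝ)
    (j j' i₁ i₂ i₃ i₄ : ι) :
    crossMoment (fun ω => Q * X ω) j j' i₁ i₂ i₃ i₄ = crossMoment X j j' i₁ i₂ i₃ i₄ :=
  ((hinv Q hQ).comp ((((measurable_apply i₁ j).mul (measurable_apply i₂ j)).mul
    (measurable_apply i₃ j')).mul (measurable_apply i₄ j'))).integral_eq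

theorem crossMoment_perm (σ : Equiv.Perm ι) (j j' i₁ i₂ i₃ i₄ : ι) :
    crossMoment X j j' (σ i₁) (σ i₂) (σ i₃) (σ i₄) = crossMoment X j j' i₁ i₂ i₃ i₄ := by
  rw [← crossMoment_mul_left hinv σ.permMatrix_mem_orthogonalGroup j j' i₁ i₂ i₃ i₄]
  simp only [crossMoment, PEquiv.toMatrix_toPEquiv_mul, submatrix_apply, id]

theorem crossMoment_eq_zero_of_sign {d : ι → ℝ} (hd : ∀ i, d i * d i = 1) {j j' i₁ i₂ i₃ i₄ : ι}
    (hodd : d i₁ * d i₂ * d i₃ * d i₄ = -1) : crossMoment X j j' i₁ i₂ i₃ i₄ = 0 := by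
  have h := crossMoment_mul_left hinv (diagonal_mem_orthogonalGroup hd) j j' i₁ i₂ i₃ i₄
  have hsign : ∀ ω, d i₁ * X ω i₁ j * (d i₂ * X ω i₂ j) * (d i₃ * X ω i₃ j') * (d i₄ * X ω i₄ j') =
      (d i₁ * d i₂ * d i₃ * d i₄) * (X ω i₁ j * X ω i₂ j * X ω i₃ j' * X ω i₄ j') :=
    fun ω => by ring
  simp only [crossMoment, diagonal_mul, hsign, hodd, integral_const_mul] at h
  rw [crossMoment]
  linarith

theorem crossMoment_diag_diag {p q : ι} (hpq : p ≠ q) (j j' k i : ι) :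
    crossMoment X j j' k k i i =
      if k = i then crossMoment X j j' p p p p else crossMoment X j j' p p q q := by
  split_ifs with hki
  · subst hki
    simpa using crossMoment_perm hinv (Equiv.swap p k) j j' p p p p
  · obtain ⟨σ, rfl, rfl⟩ := Equiv.Perm.exists_apply_eq_and_apply_eq hpq hki
    exact crossMoment_perm hinv σ j j' p p q q

theorem crossMoment_cross {p q : ι} (hpq : p ≠ q) (j j' i k : ι) :
    crossMoment X j j' i k i k =
      if i = k then crossMoment X j j' p p p p else crossMoment X j j' p q p q := by
  split_ifs with hik
  · subst hik
    simpa using crossMoment_perm hinv (Equiv.swap p i) j j' p p p p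
  · obtain ⟨σ, rfl, rfl⟩ := Equiv.Perm.exists_apply_eq_and_apply_eq hpq hik
    exact crossMoment_perm hinv σ j j' p q p q

theorem crossMoment_planeRotation [IsProbabilityMeasure (volume : Measure Ω)]
    (horth : ∀ᵐ ω, X ω ∈ orthogonalGroup ι ℝ) {p q : ι} (hpq : p ≠ q) (j j' : ι) :
    4 * crossMoment X j j' p q p q =
      crossMoment X j j' p p p p - crossMoment X j j' p p q q - crossMoment X j j' q q p p +
        crossMoment X j j' q q q q := by
  set c := √(1 / 2 : ℝ)
  have hc : c * c = 1 / 2 := Real.mul_self_sqrt (by norm_num)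
  have h := crossMoment_mul_left hinv (planeRotation_mem_orthogonalGroup hpq (c := c) (s := c)
    (by nlinarith)) j j' p q p q
  simp only [crossMoment, planeRotation_mul_apply, ↓reduceIte, hpq.symm] at h
  have hint := integrable_entry_mul_entry_mul_entry_mul_entry
    (aemeasurable_of_identDistrib_mul_left hinv) horth
  have hexpand : ∀ ω, (c * X ω p j - c * X ω q j) * (c * X ω p j + c * X ω q j) *
      (c * X ω p j' - c * X ω q j') * (c * X ω p j' + c * X ω q j') =
      (1 / 4) * (X ω p j * X ω p j * X ω p j' * X ω p j'
        - X ω p j * X ω p j * X ω q j' * X ω q j'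
        - X ω q j * X ω q j * X ω p j' * X ω p j' + X ω q j * X ω q j * X ω q j' * X ω q j') :=
    fun ω => by
      linear_combination (X ω p j ^ 2 - X ω q j ^ 2) * (X ω p j' ^ 2 - X ω q j' ^ 2) *
        (c * c + 1 / 2) * hc
  simp only [hexpand, integral_const_mul] at h
  rw [integral_add ?_ (hint ..), integral_sub ?_ (hint ..), integral_sub (hint ..) (hint ..)] at h
  · simp only [crossMoment] at h ⊢
    linarith
  · exact (hint ..).sub (hint ..)
  · exact ((hint ..).sub (hint ..)).sub (hint ..)

theorem crossMoment_values [IsProbabilityMeasure (volume : Measure Ω)]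
    (horth : ∀ᵐ ω, X ω ∈ orthogonalGroup ι ℝ) {j j' : ι} (hjj : j ≠ j') {p q : ι} (hpq : p ≠ q) :
    crossMoment X j j' p p p p =
      orthWeingartenEq (Fintype.card ι) + 2 * orthWeingartenNe (Fintype.card ι) ∧
    crossMoment X j j' p p q q = orthWeingartenEq (Fintype.card ι) ∧
    crossMoment X j j' p q p q = orthWeingartenNe (Fintype.card ι) := by
  have hX := aemeasurable_of_identDistrib_mul_left hinv
  have hn : (2 : ℝ) ≤ Fintype.card ι := by
    exact_mod_cast (Fintype.one_lt_card_iff.mpr ⟨p, q, hpq⟩ : 2 ≤ Fintype.card ι)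
  set n : ℝ := (Fintype.card ι : ℝ)
  set S := crossMoment X j j' p p p p
  set D := crossMoment X j j' p p q q
  set C := crossMoment X j j' p q p q
  have hA : n * (S - D + n * D) = 1 := by
    have h := sum_sum_crossMoment hX horth j j'
    rw [Finset.sum_congr rfl fun k _ => Finset.sum_congr rfl fun i _ =>
      crossMoment_diag_diag hinv hpq j j' k i] at h
    simpa [Fintype.sum_ite_eq_const, mul_add] using h
  have hB : S - C + n * C = 0 := by
    have h := sum_crossMoment_eq_zero hX horth hjj p
    rw [Finset.sum_congr rfl fun i _ => crossMoment_cross hinv hpq j j' p i] at h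
    simpa [Fintype.sum_ite_eq_const] using h
  have hR : 2 * C = S - D := by
    have h := crossMoment_planeRotation hinv horth hpq j j'
    rw [crossMoment_diag_diag hinv hpq j j' q p, if_neg hpq.symm,
      crossMoment_diag_diag hinv hpq j j' q q, if_pos rfl] at h
    linarith
  have hn1 : n - 1 ≠ 0 := by linarith
  have hn0 : n ≠ 0 := by linarith
  have hn2 : n + 2 ≠ 0 := by linarith
  have keyS : n * (n + 2) * S = 1 := by linear_combination hA + (n - n ^ 2) * hR + 2 * n * hB
  have keyC : (n - 1) * n * (n + 2) * C = -1 := by linear_combination n * (n + 2) * hB - keyS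
  have keyD : (n - 1) * n * (n + 2) * D = n + 1 := by
    linear_combination (n - 1) * n * (n + 2) * hR - 2 * keyC + (n - 1) * keyS
  simp only [orthWeingartenEq, orthWeingartenNe]
  refine ⟨?_, ?_, ?_⟩ <;> field_simp
  · linear_combination (n - 1) * keyS
  · linear_combination keyD
  · linear_combination keyC


theorem crossMoment_eq_zero_of_unpaired {j j' i₁ i₂ i₃ i₄ : ι} (h₁₂ : ¬(i₁ = i₂ ∧ i₃ = i₄))
    (h₁₃ : ¬(i₁ = i₃ ∧ i₂ = i₄)) (h₁₄ : ¬(i₁ = i₄ ∧ i₂ = i₃)) :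
    crossMoment X j j' i₁ i₂ i₃ i₄ = 0 := by
  have hreflect (r : ι) (hodd : (if i₁ = r then -1 else 1) * (if i₂ = r then -1 else 1) *
      (if i₃ = r then -1 else 1) * (if i₄ = r then (-1 : ℝ) else 1) = -1) :
      crossMoment X j j' i₁ i₂ i₃ i₄ = 0 :=
    crossMoment_eq_zero_of_sign hinv (d := fun i => if i = r then -1 else 1)
      (fun i => by split_ifs <;> norm_num) hodd
  by_cases hi₁₂ : i₁ = i₂
  · exact hreflect i₃ (by split_ifs <;> simp_all)
  by_cases hi₁₃ : i₁ = i₃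
  · exact hreflect i₂ (by split_ifs <;> simp_all)
  by_cases hi₁₄ : i₁ = i₄
  · exact hreflect i₂ (by split_ifs <;> simp_all)
  exact hreflect i₁ (by split_ifs <;> simp_all)

theorem crossMoment_eq_weingarten [IsProbabilityMeasure (volume : Measure Ω)]
    (horth : ∀ᵐ ω, X ω ∈ orthogonalGroup ι ℝ) {j j' : ι} (hjj : j ≠ j') (i₁ i₂ i₃ i₄ : ι) :
    crossMoment X j j' i₁ i₂ i₃ i₄ =
      orthWeingartenEq (Fintype.card ι) *
          ((if i₁ = i₂ then 1 else 0) * (if i₃ = i₄ then 1 else 0)) +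
        orthWeingartenNe (Fintype.card ι) *
          ((if i₁ = i₃ then 1 else 0) * (if i₂ = i₄ then 1 else 0) +
            (if i₁ = i₄ then 1 else 0) * (if i₂ = i₃ then 1 else 0)) := by
  obtain ⟨hS, hD, hC⟩ := crossMoment_values hinv horth hjj hjj
  by_cases h₁₂ : i₁ = i₂ ∧ i₃ = i₄
  · obtain ⟨rfl, rfl⟩ := h₁₂
    rw [crossMoment_diag_diag hinv hjj]
    by_cases h : i₁ = i₃
    · subst h
      simp only [if_true, hS]
      ring
    · simp [h, hD]
  by_cases h₁₃ : i₁ = i₃ ∧ i₂ = i₄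
  · obtain ⟨rfl, rfl⟩ := h₁₃
    have h : i₁ ≠ i₂ := fun h => h₁₂ ⟨h, h⟩
    rw [crossMoment_cross hinv hjj, if_neg h, hC]
    simp [h, Ne.symm h]
  by_cases h₁₄ : i₁ = i₄ ∧ i₂ = i₃
  · obtain ⟨rfl, rfl⟩ := h₁₄
    have h : i₁ ≠ i₂ := fun h => h₁₂ ⟨h, h.symm⟩
    rw [crossMoment_swap₃₄, crossMoment_cross hinv hjj, if_neg h, hC]
    simp [h, Ne.symm h]
  rw [crossMoment_eq_zero_of_unpaired hinv h₁₂ h₁₃ h₁₄]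
  simp only [not_and] at h₁₂ h₁₃ h₁₄
  split_ifs <;> simp_all

end CrossMoment

theorem tendsto_sq_mul_orthWeingartenEq :
    Tendsto (fun n : ℕ => (n : ℝ) ^ 2 * orthWeingartenEq n) atTop (𝓝 1) := by
  have hf : ContinuousAt (fun ε : ℝ => (1 + ε) / ((1 - ε) * (1 + 2 * ε))) 0 := by
    fun_prop (disch := norm_num)
  have h := hf.tendsto.comp tendsto_inv_atTop_nhds_zero_nat
  norm_num at h
  refine h.congr' ?_
  filter_upwards [eventually_ge_atTop 2] with n hn
  have hn : (2 : ℝ) ≤ n := by exact_mod_cast hn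
  have : (n : ℝ) - 1 ≠ 0 := by linarith
  simp only [Function.comp_apply, orthWeingartenEq]
  field_simp

theorem tendsto_sq_mul_orthWeingartenNe :
    Tendsto (fun n : ℕ => (n : ℝ) ^ 2 * orthWeingartenNe n) atTop (𝓝 0) := by
  have hf : ContinuousAt (fun ε : ℝ => -ε / ((1 - ε) * (1 + 2 * ε))) 0 := by
    fun_prop (disch := norm_num)
  have h := hf.tendsto.comp tendsto_inv_atTop_nhds_zero_nat
  norm_num at h
  refine h.congr' ?_
  filter_upwards [eventually_ge_atTop 2] with n hn
  have hn : (2 : ℝ) ≤ n := by exact_mod_cast hn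
  have : (n : ℝ) - 1 ≠ 0 := by linarith
  simp only [Function.comp_apply, orthWeingartenNe]
  field_simp

theorem haar_orthogonal_fourth_moment_limit_general
    {Ω : Type*} [MeasureSpace Ω] [IsProbabilityMeasure (volume : Measure Ω)]
    (A : ∀ n : ℕ, Ω → Matrix (Fin n) (Fin n) ℝ)
    (horth : ∀ n, ∀ᵐ ω, A n ω ∈ Matrix.orthogonalGroup (Fin n) ℝ)
    (hinv : ∀ n, ∀ Q ∈ Matrix.orthogonalGroup (Fin n) ℝ,
      IdentDistrib (fun ω => Q * A n ω) (A n) volume volume)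
    (ia ib ic id' j j' : ℕ) (hjj : j ≠ j') :
    Tendsto (fun n =>
      if h : ia < n ∧ ib < n ∧ ic < n ∧ id' < n ∧ j < n ∧ j' < n then
        (n : ℝ) ^ 2 * ∫ ω, A n ω ⟨ia, h.1⟩ ⟨j, h.2.2.2.2.1⟩ *
          A n ω ⟨ib, h.2.1⟩ ⟨j, h.2.2.2.2.1⟩ *
          A n ω ⟨ic, h.2.2.1⟩ ⟨j', h.2.2.2.2.2⟩ *
          A n ω ⟨id', h.2.2.2.1⟩ ⟨j', h.2.2.2.2.2⟩
      else 0) atTop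
      (𝓝 ((if ia = ib then (1 : ℝ) else 0) * (if ic = id' then (1 : ℝ) else 0))) := by
  have hlim := (tendsto_sq_mul_orthWeingartenEq.mul_const
      ((if ia = ib then (1 : ℝ) else 0) * (if ic = id' then 1 else 0))).add
    (tendsto_sq_mul_orthWeingartenNe.mul_const
      ((if ia = ic then (1 : ℝ) else 0) * (if ib = id' then 1 else 0) +
        (if ia = id' then 1 else 0) * (if ib = ic then 1 else 0)))
  rw [one_mul, zero_mul, add_zero] at hlim
  refine hlim.congr' ?_
  filter_upwards [eventually_gt_atTop (ia + ib + ic + id' + j + j')] with n hn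
  have h : ia < n ∧ ib < n ∧ ic < n ∧ id' < n ∧ j < n ∧ j' < n := by omega
  have hmoment := crossMoment_eq_weingarten (hinv n) (horth n)
    (j := ⟨j, h.2.2.2.2.1⟩) (j' := ⟨j', h.2.2.2.2.2⟩) (by simpa using hjj)
    ⟨ia, h.1⟩ ⟨ib, h.2.1⟩ ⟨ic, h.2.2.1⟩ ⟨id', h.2.2.2.1⟩
  rw [dif_pos h, ← crossMoment, hmoment]
  simp only [Fin.mk.injEq, Fintype.card_fin]
  ring

/-- Haar orthogonal matrices satisfy condition (iv) of the Pseudo-iid definition with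
`σ² = 1`: for fixed row indices and distinct column indices `j ≠ j'`, the rescaled
fourth cross-moment `n² E[A_{i_a j} A_{i_b j} A_{i_c j'} A_{i_d j'}]` converges to
`δ_{i_a i_b} δ_{i_c i_d}` as `n → ∞`. -/
theorem haar_orthogonal_fourth_moment_limit
    {Ω : Type*} [MeasureSpace Ω] [IsProbabilityMeasure (volume : Measure Ω)]
    (A : ∀ n : ℕ, Ω → Matrix (Fin n) (Fin n) ℝ)
    (hmeas : ∀ n, Measurable (A n))
    (horth : ∀ n, ∀ᵐ ω, A n ω ∈ Matrix.orthogonalGroup (Fin n) ℝ)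
    (hinv : ∀ n, ∀ Q ∈ Matrix.orthogonalGroup (Fin n) ℝ,
      IdentDistrib (fun ω => Q * A n ω) (A n) volume volume)
    (ia ib ic id' j j' : ℕ) (hjj : j ≠ j') :
    Tendsto (fun n =>
      if h : ia < n ∧ ib < n ∧ ic < n ∧ id' < n ∧ j < n ∧ j' < n then
        (n : ℝ) ^ 2 * ∫ ω, A n ω ⟨ia, h.1⟩ ⟨j, h.2.2.2.2.1⟩ *
          A n ω ⟨ib, h.2.1⟩ ⟨j, h.2.2.2.2.1⟩ *
          A n ω ⟨ic, h.2.2.1⟩ ⟨j', h.2.2.2.2.2⟩ *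
          A n ω ⟨id', h.2.2.2.1⟩ ⟨j', h.2.2.2.2.2⟩
      else 0) atTop
      (𝓝 ((if ia = ib then (1 : ℝ) else 0) * (if ic = id' then (1 : ℝ) else 0))) :=
  haar_orthogonal_fourth_moment_limit_general A horth hinv ia ib ic id' j j' hjj
end
end

section
/- Let C = [C_1, …, C_r] ∈ ℝ^{m×r} be a uniformly drawn orthonormal basis of a random r-dimensional subspace of ℝ^m (i.e., C is distributed as the first r columns of a Haar orthogonal matrix), let P ∈ ℝ^{r×n} have iid entries independent of C, and set A = CP ∈ ℝ^{m×n}. Then: (1) A is row-exchangeable and column-exchangeable; and (2) if the entries of P are centered with s = E[P_{11}²] < ∞, then for any row indices i_a, i_b, i_c, i_d, E[A_{i_a,1} A_{i_b,1} A_{i_c,2} A_{i_d,2}] = s² Σ_{1 ≤ k, k' ≤ r} E[C_{i_a,k} C_{i_b,k} C_{i_c,k'} C_{i_d,k'}]. -/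
/-!
Permuting the rows of `A = C P` replaces `Q` by `R Q` for a permutation matrix `R`; since `R` is
orthogonal, `R Q` has the law of `Q` and is still independent of `P`. Permuting the columns of `A`
permutes the columns of `P`, whose iid entries have a product law invariant under any permutation
of the coordinates.

For the moments, expanding `A = C P` writes the integrand as a sum of products of a function of
`C` and a function of `P`, so each term factorises by independence. The `P`-factor
`E[P_{k₁1} P_{k₂1} P_{k₃2} P_{k₄2}]` is `s² δ_{k₁k₂} δ_{k₃k₄}`, because the two columns are
independent and distinct entries are independent and centered. Entries of an orthogonal matrix
are bounded by `1`, which makes every term integrable.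
-/

open MeasureTheory ProbabilityTheory Finset
open scoped ENNReal

noncomputable section

section Measurability

variable {l m n o α : Type*} [MeasurableSpace α]

lemma measurable_matrix_entry (i : m) (j : n) : Measurable fun M : Matrix m n α => M i j :=
  (measurable_pi_apply j).comp (measurable_pi_apply i)

lemma measurable_matrix_of_entry {β : Type*} [MeasurableSpace β] {f : β → Matrix m n α}
    (hf : ∀ i j, Measurable fun x => f x i j) : Measurable f :=
  measurable_pi_lambda _ fun i => measurable_pi_lambda _ (hf i)

lemma measurable_submatrix (r : l → m) (c : o → n) :
    Measurable fun M : Matrix m n α => M.submatrix r c :=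
  measurable_matrix_of_entry fun i j => measurable_matrix_entry (r i) (c j)

lemma measurable_matrix_mul [Fintype m] :
    Measurable fun M : Matrix l m ℝ × Matrix m n ℝ => M.1 * M.2 :=
  measurable_matrix_of_entry fun i j => Finset.measurable_sum _ fun k _ =>
    ((measurable_matrix_entry i k).comp measurable_fst).mul
      ((measurable_matrix_entry k j).comp measurable_snd)

end Measurability

lemma Equiv.Perm.permMatrix_mem_orthogonalGroup_s14 {n R : Type*} [Fintype n] [DecidableEq n]
    [CommRing R] (σ : Equiv.Perm n) : σ.permMatrix R ∈ Matrix.orthogonalGroup n R := by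
  rw [Matrix.mem_orthogonalGroup_iff, Matrix.transpose_permMatrix, ← Matrix.permMatrix_mul,
    inv_mul_cancel, Matrix.permMatrix_one]

lemma memLp_top_apply_of_ae_mem_orthogonalGroup {Ω n : Type*} [MeasurableSpace Ω] {μ : Measure Ω}
    [Fintype n] [DecidableEq n] {Q : Ω → Matrix n n ℝ} (hQ : Measurable Q)
    (hQorth : ∀ᵐ ω ∂μ, Q ω ∈ Matrix.orthogonalGroup n ℝ) (i j : n) :
    MemLp (fun ω => Q ω i j) ∞ μ :=
  memLp_top_of_bound hQ.eval.eval.aestronglyMeasurable 1 <|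
    hQorth.mono fun _ hω => entry_norm_bound_of_unitary hω i j

namespace ProbabilityTheory

section Exchangeability

variable {Ω Ω' β γ : Type*} [MeasurableSpace Ω] [MeasurableSpace Ω'] [MeasurableSpace β]
  [MeasurableSpace γ] {μ : Measure Ω} {ν : Measure Ω'}

lemma IdentDistrib.prodMk_of_indepFun [IsFiniteMeasure μ] [IsFiniteMeasure ν]
    {X : Ω → β} {X' : Ω' → β} {Y : Ω → γ} {Y' : Ω' → γ}
    (hX : IdentDistrib X X' μ ν) (hY : IdentDistrib Y Y' μ ν) (hXY : IndepFun X Y μ)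
    (hXY' : IndepFun X' Y' ν) :
    IdentDistrib (fun ω => (X ω, Y ω)) (fun ω => (X' ω, Y' ω)) μ ν where
  aemeasurable_fst := hX.aemeasurable_fst.prodMk hY.aemeasurable_fst
  aemeasurable_snd := hX.aemeasurable_snd.prodMk hY.aemeasurable_snd
  map_eq := by
    rw [hXY.map_prod_eq_prod_map_map hX.aemeasurable_fst hY.aemeasurable_fst,
      hXY'.map_prod_eq_prod_map_map hX.aemeasurable_snd hY.aemeasurable_snd, hX.map_eq, hY.map_eq]

lemma iIndepFun.identDistrib_comp_perm_s14 {ι : Type*} [Fintype ι] {X : Ω → ι → β}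
    (hX : ∀ i, AEMeasurable (fun ω => X ω i) μ) (hind : iIndepFun (fun i ω => X ω i) μ)
    (e : ι ≃ ι) (hid : ∀ i, IdentDistrib (fun ω => X ω (e i)) (fun ω => X ω i) μ μ) :
    IdentDistrib (fun ω => X ω ∘ e) X μ μ where
  aemeasurable_fst := aemeasurable_pi_lambda _ fun i => hX (e i)
  aemeasurable_snd := aemeasurable_pi_lambda _ hX
  map_eq := by
    refine ((hind.precomp e.injective).map_fun_eq_pi_map fun i => hX (e i)).trans ?_
    rw [hind.map_fun_eq_pi_map hX]
    exact congrArg Measure.pi (funext fun i => (hid i).map_eq)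

lemma iIndepFun.identDistrib_submatrix {κ ι : Type*} [Fintype κ] [Fintype ι]
    {X : Ω → Matrix κ ι β} (hX : Measurable X)
    (hind : iIndepFun (fun p : κ × ι => fun ω => X ω p.1 p.2) μ) (e : κ ≃ κ) (e' : ι ≃ ι)
    (hid : ∀ p q : κ × ι,
      IdentDistrib (fun ω => X ω p.1 p.2) (fun ω => X ω q.1 q.2) μ μ) :
    IdentDistrib (fun ω => (X ω).submatrix e e') X μ μ :=
  (hind.identDistrib_comp_perm_s14 (X := fun ω (p : κ × ι) => X ω p.1 p.2)
    (fun _ => hX.eval.eval.aemeasurable)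
    (e.prodCongr e') fun p => hid _ p).comp (MeasurableEquiv.curry κ ι β).measurable

end Exchangeability

section Moments

variable {Ω : Type*} [MeasurableSpace Ω] {μ : Measure Ω}
  {ι : Type*} {f : ι → Ω → ℝ} {s : ℝ}

lemma iIndepFun.integral_mul_eq_ite [DecidableEq ι] (hind : iIndepFun f μ)
    (hL2 : ∀ i, MemLp (f i) 2 μ) (hcent : ∀ i, ∫ ω, f i ω ∂μ = 0)
    (hs : ∀ i, ∫ ω, f i ω ^ 2 ∂μ = s) (i j : ι) :
    ∫ ω, f i ω * f j ω ∂μ = if i = j then s else 0 := by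
  split_ifs with h
  · subst h
    simpa only [sq] using hs i
  · rw [(hind.indepFun h).integral_fun_mul_eq_mul_integral (hL2 i).1 (hL2 j).1]
    exact mul_eq_zero_of_left (hcent i) _

lemma iIndepFun.integrable_mul_mul_mul [IsProbabilityMeasure μ] (hind : iIndepFun f μ)
    (hL2 : ∀ i, MemLp (f i) 2 μ) {i j k l : ι} (hik : i ≠ k) (hil : i ≠ l) (hjk : j ≠ k)
    (hjl : j ≠ l) :
    Integrable (fun ω => f i ω * f j ω * (f k ω * f l ω)) μ :=
  (hind.indepFun_mul_mul₀ (fun i => (hL2 i).aemeasurable) i j k l hik hil hjk hjl).integrable_mul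
    ((hL2 i).integrable_mul (hL2 j)) ((hL2 k).integrable_mul (hL2 l))

lemma iIndepFun.integral_mul_mul_mul_eq_ite [IsProbabilityMeasure μ] [DecidableEq ι]
    (hind : iIndepFun f μ) (hL2 : ∀ i, MemLp (f i) 2 μ) (hcent : ∀ i, ∫ ω, f i ω ∂μ = 0)
    (hs : ∀ i, ∫ ω, f i ω ^ 2 ∂μ = s) {i j k l : ι} (hik : i ≠ k) (hil : i ≠ l) (hjk : j ≠ k)
    (hjl : j ≠ l) :
    ∫ ω, f i ω * f j ω * (f k ω * f l ω) ∂μ =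
      (if i = j then s else 0) * (if k = l then s else 0) := by
  have hprod := hind.indepFun_mul_mul₀ (fun i => (hL2 i).aemeasurable) i j k l hik hil hjk hjl
  refine (hprod.integral_fun_mul_eq_mul_integral ((hL2 i).1.mul (hL2 j).1)
    ((hL2 k).1.mul (hL2 l).1)).trans ?_
  exact congr_arg₂ (· * ·) (hind.integral_mul_eq_ite hL2 hcent hs i j)
    (hind.integral_mul_eq_ite hL2 hcent hs k l)

theorem integral_fourth_cross_moment_mul_of_indepFun {l r n : Type*} [IsProbabilityMeasure μ]
    [Fintype r] {X : Ω → Matrix l r ℝ} {Y : Ω → Matrix r n ℝ} (hXY : IndepFun X Y μ)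
    (hX : ∀ i k, MemLp (fun ω => X ω i k) ∞ μ)
    (hYind : iIndepFun (fun p : r × n => fun ω => Y ω p.1 p.2) μ)
    (hYL2 : ∀ p : r × n, MemLp (fun ω => Y ω p.1 p.2) 2 μ)
    (hYcent : ∀ p : r × n, ∫ ω, Y ω p.1 p.2 ∂μ = 0)
    (hs : ∀ p : r × n, ∫ ω, Y ω p.1 p.2 ^ 2 ∂μ = s) {c c' : n} (hc : c ≠ c') (a b d e : l) :
    ∫ ω, (X ω * Y ω) a c * (X ω * Y ω) b c * (X ω * Y ω) d c' * (X ω * Y ω) e c' ∂μ =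
      s ^ 2 * ∑ k, ∑ k', ∫ ω, X ω a k * X ω b k * X ω d k' * X ω e k' ∂μ := by
  classical
  set ξ : r → r → r → r → Ω → ℝ :=
    fun k₁ k₂ k₃ k₄ ω => X ω a k₁ * X ω b k₂ * X ω d k₃ * X ω e k₄
  set η : r → r → r → r → Ω → ℝ :=
    fun k₁ k₂ k₃ k₄ ω => Y ω k₁ c * Y ω k₂ c * (Y ω k₃ c' * Y ω k₄ c')
  have hexpand : ∀ ω, (X ω * Y ω) a c * (X ω * Y ω) b c * (X ω * Y ω) d c' * (X ω * Y ω) e c' =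
      ∑ k₄, ∑ k₃, ∑ k₂, ∑ k₁, ξ k₁ k₂ k₃ k₄ ω * η k₁ k₂ k₃ k₄ ω := by
    intro ω
    simp only [Matrix.mul_apply, Finset.sum_mul, Finset.mul_sum, ξ, η]
    congr! 4
    ring
  have hne : ∀ k k' : r, (k, c) ≠ (k', c') := fun _ _ h => hc (Prod.ext_iff.1 h).2
  have hξ : ∀ k₁ k₂ k₃ k₄, MemLp (ξ k₁ k₂ k₃ k₄) ∞ μ := fun k₁ k₂ k₃ k₄ =>
    (hX e k₄).mul' (r := ∞) ((hX d k₃).mul' (r := ∞) ((hX b k₂).mul' (r := ∞) (hX a k₁)))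
  have hη : ∀ k₁ k₂ k₃ k₄, Integrable (η k₁ k₂ k₃ k₄) μ := fun k₁ k₂ k₃ k₄ =>
    hYind.integrable_mul_mul_mul hYL2 (hne k₁ k₃) (hne k₁ k₄) (hne k₂ k₃) (hne k₂ k₄)
  have hfactor : ∀ k₁ k₂ k₃ k₄, ∫ ω, ξ k₁ k₂ k₃ k₄ ω * η k₁ k₂ k₃ k₄ ω ∂μ =
      (∫ ω, ξ k₁ k₂ k₃ k₄ ω ∂μ) * ((if k₁ = k₂ then s else 0) * (if k₃ = k₄ then s else 0)) := by
    intro k₁ k₂ k₃ k₄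
    have hind : IndepFun (ξ k₁ k₂ k₃ k₄) (η k₁ k₂ k₃ k₄) μ :=
      hXY.comp (φ := fun M : Matrix l r ℝ => M a k₁ * M b k₂ * M d k₃ * M e k₄)
        (ψ := fun N : Matrix r n ℝ => N k₁ c * N k₂ c * (N k₃ c' * N k₄ c')) (by fun_prop)
        (by fun_prop)
    rw [hind.integral_fun_mul_eq_mul_integral (hξ _ _ _ _).1 (hη _ _ _ _).1,
      hYind.integral_mul_mul_mul_eq_ite hYL2 hYcent hs (hne k₁ k₃) (hne k₁ k₄) (hne k₂ k₃)
        (hne k₂ k₄)]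
    simp only [Prod.mk.injEq, and_true]
  have hint : ∀ k₁ k₂ k₃ k₄, Integrable (fun ω => ξ k₁ k₂ k₃ k₄ ω * η k₁ k₂ k₃ k₄ ω) μ :=
    fun k₁ k₂ k₃ k₄ => (hη k₁ k₂ k₃ k₄).mul_of_top_right (hξ k₁ k₂ k₃ k₄)
  simp_rw [hexpand]
  simp (disch := intros; fun_prop) only [integral_finsetSum]
  simp only [hfactor, ite_mul, mul_ite, zero_mul, mul_zero, Finset.sum_ite_irrel,
    Finset.sum_const_zero, Finset.sum_ite_eq', Finset.mem_univ, if_true]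
  rw [Finset.sum_comm, Finset.mul_sum]
  simp only [Finset.mul_sum, ξ]
  congr! 2
  ring

end Moments

end ProbabilityTheory

/-- A random low-rank matrix `A = C P`, where `C` consists of the first `r` columns of a
Haar orthogonal matrix and `P` has iid entries independent of `C`, is row- and
column-exchangeable; moreover if the entries of `P` are centered with finite second moment
`s = E[P₁₁²]`, the fourth cross-moments of `A` factorize as
`E[A_{i_a,1} A_{i_b,1} A_{i_c,2} A_{i_d,2}] = s² Σ_{k,k'} E[C_{i_a,k} C_{i_b,k} C_{i_c,k'} C_{i_d,k'}]`. -/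
theorem lowrank_pseudoiid
    {Ω : Type*} [MeasureSpace Ω] [IsProbabilityMeasure (volume : Measure Ω)]
    (m r n : ℕ) (hr : r ≤ m) (hr0 : 0 < r) (hn : 2 ≤ n)
    (Q : Ω → Matrix (Fin m) (Fin m) ℝ) (hQmeas : Measurable Q)
    (hQorth : ∀ᵐ ω, Q ω ∈ Matrix.orthogonalGroup (Fin m) ℝ)
    (hQinv : ∀ R ∈ Matrix.orthogonalGroup (Fin m) ℝ,
      IdentDistrib (fun ω => R * Q ω) Q volume volume)
    (C : Ω → Matrix (Fin m) (Fin r) ℝ)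
    (hC : ∀ ω, C ω = Matrix.of fun i k => Q ω i (Fin.castLE hr k))
    (P : Ω → Matrix (Fin r) (Fin n) ℝ) (hPmeas : Measurable P)
    (hindep : IndepFun Q P volume)
    (hPiid : iIndepFun
      (fun p : Fin r × Fin n => fun ω => P ω p.1 p.2) volume)
    (hPid : ∀ p q : Fin r × Fin n,
      IdentDistrib (fun ω => P ω p.1 p.2) (fun ω => P ω q.1 q.2) volume volume)
    (A : Ω → Matrix (Fin m) (Fin n) ℝ) (hA : ∀ ω, A ω = C ω * P ω) :
    ((∀ σ : Equiv.Perm (Fin m),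
        IdentDistrib (fun ω => (A ω).submatrix σ id) A volume volume) ∧
      (∀ τ : Equiv.Perm (Fin n),
        IdentDistrib (fun ω => (A ω).submatrix id τ) A volume volume)) ∧
    ((∀ k l, ∫ ω, P ω k l = 0) →
      Integrable (fun ω => (P ω ⟨0, hr0⟩ ⟨0, by omega⟩) ^ 2) →
      ∀ i_a i_b i_c i_d : Fin m,
        ∫ ω, A ω i_a ⟨0, by omega⟩ * A ω i_b ⟨0, by omega⟩ *
            A ω i_c ⟨1, by omega⟩ * A ω i_d ⟨1, by omega⟩ =
          (∫ ω, (P ω ⟨0, hr0⟩ ⟨0, by omega⟩) ^ 2) ^ 2 *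
            ∑ k : Fin r, ∑ k' : Fin r,
              ∫ ω, C ω i_a k * C ω i_b k * C ω i_c k' * C ω i_d k') := by
  obtain rfl : A = fun ω => C ω * P ω := funext hA
  obtain rfl : C = fun ω => (Q ω).submatrix id (Fin.castLE hr) := funext hC
  set F : Matrix (Fin m) (Fin m) ℝ × Matrix (Fin r) (Fin n) ℝ → Matrix (Fin m) (Fin n) ℝ :=
    fun QP => QP.1.submatrix id (Fin.castLE hr) * QP.2
  have hF : Measurable F := measurable_matrix_mul.comp
    (((measurable_submatrix id (Fin.castLE hr)).comp measurable_fst).prodMk measurable_snd)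
  refine ⟨⟨fun σ => ?_, fun τ => ?_⟩, fun hcent hsq i_a i_b i_c i_d => ?_⟩
  · have hrow : (fun ω => (F (Q ω, P ω)).submatrix σ id) =
        fun ω => F (σ.permMatrix ℝ * Q ω, P ω) := by
      ext ω i j
      simp [F, Matrix.mul_apply, PEquiv.toMatrix_toPEquiv_mul]
    rw [hrow]
    exact ((hQinv _ σ.permMatrix_mem_orthogonalGroup_s14).prodMk_of_indepFun
      (.refl hPmeas.aemeasurable)
      (hindep.comp (measurable_matrix_mul.comp (measurable_const.prodMk measurable_id))
        measurable_id) hindep).comp hF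
  · have hcol : (fun ω => (F (Q ω, P ω)).submatrix id τ) =
        fun ω => F (Q ω, (P ω).submatrix id τ) := by
      ext ω i j
      simp [F, Matrix.mul_apply]
    rw [hcol]
    exact ((IdentDistrib.refl hQmeas.aemeasurable).prodMk_of_indepFun
      (hPiid.identDistrib_submatrix hPmeas (.refl _) τ hPid)
      (hindep.comp measurable_id (measurable_submatrix id τ)) hindep).comp hF
  · have hL2 : ∀ p : Fin r × Fin n, MemLp (fun ω => P ω p.1 p.2) 2 volume := fun p =>
      (hPid (⟨0, hr0⟩, ⟨0, by omega⟩) p).memLp_snd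
        ((memLp_two_iff_integrable_sq hPmeas.eval.eval.aestronglyMeasurable).2 hsq)
    have hs : ∀ p : Fin r × Fin n, ∫ ω, P ω p.1 p.2 ^ 2 = ∫ ω, P ω ⟨0, hr0⟩ ⟨0, by omega⟩ ^ 2 :=
      fun p => (hPid p (⟨0, hr0⟩, ⟨0, by omega⟩)).sq.integral_eq
    exact integral_fourth_cross_moment_mul_of_indepFun
      (hindep.comp (measurable_submatrix id (Fin.castLE hr)) measurable_id)
      (fun i k => memLp_top_apply_of_ae_mem_orthogonalGroup hQmeas hQorth i _) hPiid hL2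
      (fun p => hcent p.1 p.2) hs (by simp [Fin.ext_iff]) i_a i_b i_c i_d
end
end
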